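/- (Lemma 1 of the paper.) Let B, P, N₀, β₂, σ be positive real numbers, let β₁ ≥ 0 and τmax be real numbers with β₁ < τmax. Set x = N₀·B·(2^{β₂/(B·(τmax − β₁))} − 1)/(P·σ). Let h be a random variable distributed according to the Gaussian measure on ℝ with mean 0 and variance σ², and for |h| > 0 define R(h) = B·log₂(1 + |h|·P/(N₀·B)) and τ(h) = β₁ + β₂/R(h). Then the reasoning success probability satisfies P(τ(h) ≤ τmax) ≤ exp(−x²/2). -/

import Mathlib

open ProbabilityTheory MeasureTheory Real
open scoped NNReal

lemma half_gauss_integral (v : ℝ) (hv : 0 < v) :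
    ∫ u in Set.Ici (0:ℝ), Real.exp (-u^2/(2*v)) = Real.sqrt (2*Real.pi*v) / 2 := by
  rw [MeasureTheory.integral_Ici_eq_integral_Ioi]
  have h : ∀ u : ℝ, Real.exp (-u^2/(2*v)) = Real.exp (-(1/(2*v)) * u^2) := by
    intro u; congr 1; field_simp
  simp_rw [h]
  rw [integral_gaussian_Ioi]
  congr 2
  field_simp

lemma gaussian_tail_Ici (V : ℝ≥0) (hV : 0 < (V:ℝ)) (t : ℝ) (ht : 0 ≤ t) :
    gaussianReal 0 V (Set.Ici t) ≤ ENNReal.ofReal (Real.exp (-t^2/(2*(V:ℝ))) / 2) := by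
  have hV0 : V ≠ 0 := by exact_mod_cast hV.ne'
  set v : ℝ := (V:ℝ) with hv
  set c : ℝ := (Real.sqrt (2*Real.pi*v))⁻¹ with hc
  have hv' : 0 < v := hV
  have hsq : 0 < Real.sqrt (2*Real.pi*v) := Real.sqrt_pos.mpr (by positivity)
  rw [gaussianReal_apply_eq_integral _ hV0]
  apply ENNReal.ofReal_le_ofReal
  have hint0 : IntegrableOn (gaussianPDFReal 0 V) (Set.Ici t) :=
    (integrable_gaussianPDFReal 0 V).integrableOn
  have hintg : Integrable (fun u : ℝ => Real.exp (-(1/(2*v)) * u^2)) :=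
    integrable_exp_neg_mul_sq (by positivity)
  have hform : ∀ u : ℝ, Real.exp (-u^2/(2*v)) = Real.exp (-(1/(2*v)) * u^2) := by
    intro u; congr 1; field_simp
  have hint1 : IntegrableOn (fun h : ℝ => Real.exp (-t^2/(2*v)) * (c * Real.exp (-(h-t)^2/(2*v)))) (Set.Ici t) := by
    apply Integrable.integrableOn
    have : Integrable (fun h : ℝ => Real.exp (-(h-t)^2/(2*v))) := by
      simp_rw [hform]
      exact hintg.comp_sub_right t
    exact (this.const_mul c).const_mul _
  have hstep : ∫ h in Set.Ici t, gaussianPDFReal 0 V h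
      ≤ ∫ h in Set.Ici t, Real.exp (-t^2/(2*v)) * (c * Real.exp (-(h-t)^2/(2*v))) := by
    apply setIntegral_mono_on hint0 hint1 measurableSet_Ici
    intro h hh
    rw [Set.mem_Ici] at hh
    unfold gaussianPDFReal
    rw [sub_zero]
    have hexp : Real.exp (-h^2/(2*v)) ≤ Real.exp (-t^2/(2*v)) * Real.exp (-(h-t)^2/(2*v)) := by
      rw [← Real.exp_add]
      apply Real.exp_le_exp.mpr
      rw [← add_div, div_le_div_iff_of_pos_right (by positivity)]
      nlinarith [mul_nonneg ht (sub_nonneg.mpr hh)]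
    calc c * Real.exp (-h^2/(2*v)) ≤ c * (Real.exp (-t^2/(2*v)) * Real.exp (-(h-t)^2/(2*v))) := by
          apply mul_le_mul_of_nonneg_left hexp (by positivity)
      _ = Real.exp (-t^2/(2*v)) * (c * Real.exp (-(h-t)^2/(2*v))) := by ring
  refine hstep.trans ?_
  rw [MeasureTheory.integral_const_mul, MeasureTheory.integral_const_mul]
  have htrans : ∫ h in Set.Ici t, Real.exp (-(h-t)^2/(2*v))
      = ∫ u in Set.Ici (0:ℝ), Real.exp (-u^2/(2*v)) := by
    rw [← MeasureTheory.integral_indicator measurableSet_Ici,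
        ← MeasureTheory.integral_indicator measurableSet_Ici]
    rw [← MeasureTheory.integral_sub_right_eq_self
        (fun u => Set.indicator (Set.Ici (0:ℝ)) (fun w => Real.exp (-w^2/(2*v))) u) t]
    congr 1
    ext h
    by_cases hh : t ≤ h
    · rw [Set.indicator_of_mem (Set.mem_Ici.mpr hh),
        Set.indicator_of_mem (Set.mem_Ici.mpr (by linarith : (0:ℝ) ≤ h - t))]
    · rw [Set.indicator_of_notMem (by simpa using hh),
        Set.indicator_of_notMem (by simp [Set.mem_Ici]; linarith)]
  rw [htrans, half_gauss_integral v (by positivity)]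
  rw [hc]
  rw [inv_mul_eq_div, div_div_cancel_left']
  · exact le_refl _
  · exact hsq.ne'

/-- Lemma 1 of the paper: the reasoning success probability
`P(τ(h) ≤ τmax)`, where `τ(h) = β₁ + β₂ / R(h)` and
`R(h) = B·log₂(1 + |h|·P/(N₀·B))` with Gaussian channel gain `h ~ N(0, σ²)`,
is upper bounded by `exp(−x²/2)` with
`x = N₀·B·(2^{β₂/(B·(τmax − β₁))} − 1)/(P·σ)`. -/
theorem reasoning_success_probability_bound
    (B P N₀ β₂ σ : ℝ) (hB : 0 < B) (hP : 0 < P) (hN₀ : 0 < N₀)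
    (hβ₂ : 0 < β₂) (hσ : 0 < σ)
    (β₁ τmax : ℝ) (hβ₁ : 0 ≤ β₁) (hβτ : β₁ < τmax)
    (x : ℝ)
    (hx : x = N₀ * B * ((2 : ℝ) ^ (β₂ / (B * (τmax - β₁))) - 1) / (P * σ))
    (R τ : ℝ → ℝ)
    (hR : ∀ h : ℝ, 0 < |h| → R h = B * Real.logb 2 (1 + |h| * P / (N₀ * B)))
    (hτ : ∀ h : ℝ, 0 < |h| → τ h = β₁ + β₂ / R h) :
    gaussianReal 0 (⟨σ ^ 2, sq_nonneg σ⟩ : NNReal)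
        {h : ℝ | 0 < |h| ∧ τ h ≤ τmax} ≤
      ENNReal.ofReal (Real.exp (-x ^ 2 / 2)) := by
  set V : ℝ≥0 := (⟨σ ^ 2, sq_nonneg σ⟩ : NNReal) with hVdef
  have hVpos : 0 < (V:ℝ) := by exact (by positivity : (0:ℝ) < σ ^ 2)
  set e : ℝ := β₂ / (B * (τmax - β₁)) with he_def
  have hd : 0 < τmax - β₁ := by linarith
  have he : 0 < e := by positivity
  have h2e : (1:ℝ) ≤ (2:ℝ) ^ e := Real.one_le_rpow one_le_two he.le
  have hxnn : 0 ≤ x := by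
    rw [hx]
    apply div_nonneg _ (by positivity)
    have : (0:ℝ) ≤ (2:ℝ) ^ e - 1 := by linarith
    exact mul_nonneg (by positivity) this
  set t : ℝ := σ * x with ht_def
  have htnn : 0 ≤ t := mul_nonneg hσ.le hxnn
  -- subset step
  have hsub : {h : ℝ | 0 < |h| ∧ τ h ≤ τmax} ⊆ Set.Iic (-t) ∪ Set.Ici t := by
    intro h ⟨hh, hle⟩
    have hu : 0 < |h| * P / (N₀ * B) := by positivity
    have hl : 0 < Real.logb 2 (1 + |h| * P / (N₀ * B)) :=
      Real.logb_pos one_lt_two (by linarith)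
    have hRh : R h = B * Real.logb 2 (1 + |h| * P / (N₀ * B)) := hR h hh
    have hRpos : 0 < R h := by rw [hRh]; positivity
    rw [hτ h hh] at hle
    have h1 : β₂ / R h ≤ τmax - β₁ := by linarith
    have h2 : β₂ ≤ (τmax - β₁) * R h := by
      rwa [div_le_iff₀ hRpos] at h1
    have h3 : e ≤ Real.logb 2 (1 + |h| * P / (N₀ * B)) := by
      rw [he_def, div_le_iff₀ (by positivity)]
      rw [hRh] at h2
      nlinarith
    have h4 : (2:ℝ) ^ e ≤ 1 + |h| * P / (N₀ * B) := by
      calc (2:ℝ) ^ e ≤ (2:ℝ) ^ Real.logb 2 (1 + |h| * P / (N₀ * B)) :=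
            Real.rpow_le_rpow_of_exponent_le one_le_two h3
        _ = 1 + |h| * P / (N₀ * B) := Real.rpow_logb two_pos (by norm_num) (by linarith)
    have h5 : t ≤ |h| := by
      have ht_eq : t = N₀ * B * ((2:ℝ) ^ e - 1) / P := by
        rw [ht_def, hx]; field_simp
      rw [ht_eq, div_le_iff₀ hP]
      have h6 : (2:ℝ) ^ e - 1 ≤ |h| * P / (N₀ * B) := by linarith
      rw [le_div_iff₀ (by positivity)] at h6
      nlinarith
    rcases le_abs.mp h5 with h7 | h7
    · exact Or.inr h7
    · exact Or.inl (by simpa [Set.mem_Iic] using by linarith)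
  -- symmetry
  have hmap : (gaussianReal 0 V).map (fun h => (-1:ℝ) * h) = gaussianReal 0 V := by
    rw [gaussianReal_map_const_mul]
    congr 1
    · ring
    · exact NNReal.eq (by push_cast; norm_num)
  have hIic : gaussianReal 0 V (Set.Iic (-t)) = gaussianReal 0 V (Set.Ici t) := by
    conv_lhs => rw [← hmap]
    rw [Measure.map_apply (measurable_const_mul _) measurableSet_Iic]
    congr 1
    ext h
    simp [neg_one_mul, neg_le_neg_iff]
  have htail := gaussian_tail_Ici V hVpos t htnn
  have hexp_eq : Real.exp (-t^2/(2*(V:ℝ))) = Real.exp (-x^2/2) := by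
    congr 1
    rw [ht_def]
    have : ((V:ℝ)) = σ^2 := rfl
    rw [this]
    field_simp
  calc gaussianReal 0 V {h : ℝ | 0 < |h| ∧ τ h ≤ τmax}
      ≤ gaussianReal 0 V (Set.Iic (-t) ∪ Set.Ici t) := measure_mono hsub
    _ ≤ gaussianReal 0 V (Set.Iic (-t)) + gaussianReal 0 V (Set.Ici t) :=
        measure_union_le _ _
    _ ≤ ENNReal.ofReal (Real.exp (-x^2/2) / 2) + ENNReal.ofReal (Real.exp (-x^2/2) / 2) := by
        rw [hIic]
        exact add_le_add (hexp_eq ▸ htail) (hexp_eq ▸ htail)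
    _ = ENNReal.ofReal (Real.exp (-x^2/2)) := by
        rw [← ENNReal.ofReal_add (by positivity) (by positivity)]
        ring_nf
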